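/- Let b, c be real numbers with c > 0 and b(2b+1) + c ≠ 0. Set λ₁ = 2c/(b(2b+1)+c), p₁ = b(2b+1)/(b(2b+1)+c), p₂ = b(2b+1)/(2c). Then for every z ∈ (0,1), the function z ↦ λ₁ z^c (1−z)^(1/2−c) e^(−p₂z) [ ₂F₁(−b+1/2, b+1; c+1; z) − ₂F₁(−b−1/2, b; c; z) ] has derivative at z equal to z^c (1−z)^(−c−1/2) (1 − p₁z) e^(−p₂z) ₂F₁(−b−1/2, b; c; z). (Equivalently, ∫ z^c(1−z)^(−c−1/2)(1−p₁z)e^(−p₂z) ₂F₁(−b−1/2,b;c;z)dz = λ₁ z^c(1−z)^(1/2−c)e^(−p₂z)[₂F₁(−b+1/2,b+1;c+1;z) − ₂F₁(−b−1/2,b;c;z)] + c̃.) -/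

import Mathlib

open Real

/-! For `F = ₂F₁(a,b;c)` and `G = ₂F₁(a+1,b+1;c+1)` one has `F' = (ab/c) G`, and comparing
power series coefficients gives the contiguous relation `z(1-z) G' + (c - (a+b+1) z) G = c F`.
Together they make `w(t) = t^c (1-t)^(a+b+1-c) e^{(ab/c) t}` an integrating factor: in
`(w (G - F))'` the terms in `G` cancel, leaving
`z^c (1-z)^(a+b-c) e^{(ab/c) z} (a+b+1 - (ab/c)(1-z)) F`. The theorem is the case `a = -b - 1/2`,
where `ab/c = -p₂` and `a+b+1 = 1/2`, and `λ₁` turns `1/2 + p₂ (1-z)` into `1 - p₁ z`. -/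

section PowerSeries

variable {𝕜 F : Type*} [NontriviallyNormedField 𝕜] [NormedAddCommGroup F] [NormedSpace 𝕜 F]
  [CompleteSpace F]

theorem FormalMultilinearSeries.hasDerivAt_sum_of_hasSum (p : FormalMultilinearSeries 𝕜 𝕜 F)
    {x : 𝕜} (hx : ‖x‖ₑ < p.radius) {f' : F}
    (hf' : HasSum (fun n => x ^ n • ((n + 1) • p.coeff (n + 1))) f') :
    HasDerivAt p.sum f' x := by
  have hsum := (p.derivSeries.hasSum (x := x)
    (by simpa using hx.trans_le p.radius_le_radius_derivSeries)).mapL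
    (ContinuousLinearMap.apply 𝕜 F (1 : 𝕜))
  simp only [ContinuousLinearMap.apply_apply, apply_eq_pow_smul_coeff, _root_.smul_apply,
    derivSeries_coeff_one] at hsum
  exact (p.hasFDerivAt_sum hx).hasDerivAt.congr_deriv (hsum.unique hf')

end PowerSeries

theorem HasSum.mul_pow_of_shift {R : Type*} [CommRing R] [TopologicalSpace R]
    [IsTopologicalRing R] {u v : ℕ → R} {z V : R} (hv : HasSum (fun n => v n * z ^ n) V)
    (h0 : u 0 = 0) (hsucc : ∀ n, u (n + 1) = v n) :
    HasSum (fun n => u n * z ^ n) (z * V) := by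
  have h : HasSum (fun n => u (n + 1) * z ^ (n + 1)) (z * V) := by
    simpa only [hsucc, pow_succ, mul_left_comm, mul_comm _ z] using hv.mul_left z
  simpa [h0] using (hasSum_nat_add_iff (f := fun n => u n * z ^ n) 1).mp h

theorem natCast_ne_neg_add_one {R : Type*} [Ring R] {c : R} (hc : ∀ k : ℕ, (k : R) ≠ -c)
    (k : ℕ) : (k : R) ≠ -(c + 1) := fun h =>
  hc (k + 1) (by rw [Nat.cast_succ, h]; abel)

theorem ascPochhammer_succ_eval_left {S : Type*} [CommSemiring S] (n : ℕ) (x : S) :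
    (ascPochhammer S (n + 1)).eval x = x * (ascPochhammer S n).eval (x + 1) := by
  simp [ascPochhammer_succ_left, Polynomial.eval_comp]

section Coefficients

variable {𝕂 : Type*} [Field 𝕂] [CharZero 𝕂]

theorem succ_mul_ordinaryHypergeometricCoefficient_succ (a b c : 𝕂) (n : ℕ) :
    (n + 1) * ordinaryHypergeometricCoefficient a b c (n + 1) =
      a * b / c * ordinaryHypergeometricCoefficient (a + 1) (b + 1) (c + 1) n := by
  have hn : (n : 𝕂) + 1 ≠ 0 := Nat.cast_add_one_ne_zero n
  simp only [ordinaryHypergeometricCoefficient, ascPochhammer_succ_eval_left, Nat.factorial_succ,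
    Nat.cast_mul, Nat.cast_succ, mul_inv]
  field_simp

theorem ordinaryHypergeometricCoefficient_succ_contiguous (a b : 𝕂) {c : 𝕂} (hc : c ≠ 0)
    {n : ℕ} (hcn : c + 1 + n ≠ 0) :
    (n + 1 + c) * ordinaryHypergeometricCoefficient (a + 1) (b + 1) (c + 1) (n + 1) =
      (n + 1 + a + b) * ordinaryHypergeometricCoefficient (a + 1) (b + 1) (c + 1) n +
        c * ordinaryHypergeometricCoefficient a b c (n + 1) := by
  have hn : (n : 𝕂) + 1 ≠ 0 := Nat.cast_add_one_ne_zero n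
  rw [ordinaryHypergeometricCoefficient, ordinaryHypergeometricCoefficient,
    ordinaryHypergeometricCoefficient, ascPochhammer_succ_eval n (a + 1),
    ascPochhammer_succ_eval n (b + 1), ascPochhammer_succ_eval n (c + 1),
    ascPochhammer_succ_eval_left n a, ascPochhammer_succ_eval_left n b,
    ascPochhammer_succ_eval_left n c]
  simp only [Nat.factorial_succ, Nat.cast_mul, Nat.cast_succ, mul_inv]
  generalize ((ascPochhammer 𝕂 n).eval (c + 1))⁻¹ = q
  have hf : (n.factorial : 𝕂) ≠ 0 := Nat.cast_ne_zero.2 n.factorial_ne_zero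
  field_simp
  ring

end Coefficients

section Hypergeometric

variable {𝕂 : Type*} [RCLike 𝕂]

theorem one_le_ordinaryHypergeometricSeries_radius (𝔸 : Type*) [NormedDivisionRing 𝔸]
    [NormedAlgebra 𝕂 𝔸] (a b : 𝕂) {c : 𝕂} (hc : ∀ k : ℕ, (k : 𝕂) ≠ -c) :
    1 ≤ (ordinaryHypergeometricSeries 𝔸 a b c).radius := by
  by_cases ha : ∃ k : ℕ, a = -k
  · obtain ⟨k, rfl⟩ := ha
    simp [ordinaryHypergeometric_radius_top_of_neg_nat₁]
  by_cases hb : ∃ k : ℕ, b = -k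
  · obtain ⟨k, rfl⟩ := hb
    simp [ordinaryHypergeometric_radius_top_of_neg_nat₂]
  refine (ordinaryHypergeometricSeries_radius_eq_one 𝔸 a b c fun k => ⟨?_, ?_, hc k⟩).ge
  · exact fun h => ha ⟨k, by rw [h, neg_neg]⟩
  · exact fun h => hb ⟨k, by rw [h, neg_neg]⟩

theorem enorm_lt_ordinaryHypergeometricSeries_radius (a b : 𝕂) {c z : 𝕂}
    (hc : ∀ k : ℕ, (k : 𝕂) ≠ -c) (hz : ‖z‖ < 1) :
    ‖z‖ₑ < (ordinaryHypergeometricSeries 𝕂 a b c).radius :=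
  lt_of_lt_of_le (by rw [enorm_eq_nnnorm]; exact_mod_cast hz)
    (one_le_ordinaryHypergeometricSeries_radius 𝕂 a b hc)

theorem hasSum_ordinaryHypergeometric (a b : 𝕂) {c z : 𝕂} (hc : ∀ k : ℕ, (k : 𝕂) ≠ -c)
    (hz : ‖z‖ < 1) :
    HasSum (fun n => ordinaryHypergeometricCoefficient a b c n * z ^ n) (₂F₁ a b c z) := by
  have h := (ordinaryHypergeometricSeries 𝕂 a b c).hasSum <| Metric.mem_eball.2 <| by
    rw [edist_zero_right]; exact enorm_lt_ordinaryHypergeometricSeries_radius a b hc hz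
  simp only [ordinaryHypergeometricSeries_apply_eq, smul_eq_mul] at h
  exact h

theorem hasDerivAt_ordinaryHypergeometric (a b : 𝕂) {c z : 𝕂} (hc : ∀ k : ℕ, (k : 𝕂) ≠ -c)
    (hz : ‖z‖ < 1) :
    HasDerivAt (₂F₁ a b c) (a * b / c * ₂F₁ (a + 1) (b + 1) (c + 1) z) z := by
  refine (ordinaryHypergeometricSeries 𝕂 a b c).hasDerivAt_sum_of_hasSum
    (enorm_lt_ordinaryHypergeometricSeries_radius a b hc hz) ?_
  refine ((hasSum_ordinaryHypergeometric (a + 1) (b + 1) (natCast_ne_neg_add_one hc)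
    hz).mul_left (a * b / c)).congr_fun fun n => ?_
  simp only [ordinaryHypergeometricSeries, FormalMultilinearSeries.coeff_ofScalars]
  rw [nsmul_eq_mul, smul_eq_mul, Nat.cast_succ, succ_mul_ordinaryHypergeometricCoefficient_succ]
  ring

theorem ordinaryHypergeometric_contiguous (a b : 𝕂) {c z : 𝕂} (hc : ∀ k : ℕ, (k : 𝕂) ≠ -c)
    (hz : ‖z‖ < 1) :
    z * (1 - z) * ((a + 1) * (b + 1) / (c + 1) * ₂F₁ (a + 2) (b + 2) (c + 2) z) +
      (c - (a + b + 1) * z) * ₂F₁ (a + 1) (b + 1) (c + 1) z = c * ₂F₁ a b c z := by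
  set e := ordinaryHypergeometricCoefficient a b c
  set g := ordinaryHypergeometricCoefficient (a + 1) (b + 1) (c + 1)
  set K := (a + 1) * (b + 1) / (c + 1) * ₂F₁ (a + 2) (b + 2) (c + 2) z
  set G := ₂F₁ (a + 1) (b + 1) (c + 1) z
  have hc1 := natCast_ne_neg_add_one hc
  have hF : HasSum (fun n => e n * z ^ n) (₂F₁ a b c z) := hasSum_ordinaryHypergeometric a b hc hz
  have hG : HasSum (fun n => g n * z ^ n) G := hasSum_ordinaryHypergeometric _ _ hc1 hz
  have hK : HasSum (fun n => ((n + 1) * g (n + 1)) * z ^ n) K := by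
    have h : HasSum (fun n => ((n + 1) * g (n + 1)) * z ^ n)
        ((a + 1) * (b + 1) / (c + 1) * ₂F₁ (a + 1 + 1) (b + 1 + 1) (c + 1 + 1) z) :=
      ((hasSum_ordinaryHypergeometric (a + 1 + 1) (b + 1 + 1) (natCast_ne_neg_add_one hc1)
        hz).mul_left _).congr_fun fun n => by
        show (n + 1) * ordinaryHypergeometricCoefficient (a + 1) (b + 1) (c + 1) (n + 1) * _ = _
        rw [succ_mul_ordinaryHypergeometricCoefficient_succ, mul_assoc]
    rwa [show a + 1 + 1 = a + 2 by ring, show b + 1 + 1 = b + 2 by ring,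
      show c + 1 + 1 = c + 2 by ring] at h
  have hθ : HasSum (fun n => (n * g n) * z ^ n) (z * K) :=
    hK.mul_pow_of_shift (by simp) fun n => by push_cast; ring
  -- both sides of `z K + c G - c F = z (z K + (a + b + 1) G)` have the same coefficients
  have hL : HasSum (fun n => (n * g n + c * g n - c * e n) * z ^ n)
      (z * K + c * G - c * ₂F₁ a b c z) :=
    ((hθ.add (hG.mul_left c)).sub (hF.mul_left c)).congr_fun fun n => by ring
  have hR : HasSum (fun n => (n * g n + c * g n - c * e n) * z ^ n)
      (z * (z * K + (a + b + 1) * G)) := by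
    have h : HasSum (fun n => ((n + (a + b + 1)) * g n) * z ^ n) (z * K + (a + b + 1) * G) :=
      (hθ.add (hG.mul_left (a + b + 1))).congr_fun fun n => by ring
    refine h.mul_pow_of_shift (by simp [e, g, ordinaryHypergeometricCoefficient]) fun n => ?_
    have hcoeff := ordinaryHypergeometricCoefficient_succ_contiguous a b (c := c) (n := n)
      (fun h => hc 0 (by simp [h])) (fun h => hc (n + 1) (by push_cast; linear_combination h))
    push_cast
    linear_combination hcoeff
  linear_combination hL.unique hR

end Hypergeometric

theorem hasDerivAt_rpow_mul_one_sub_rpow_mul_exp_mul_ordinaryHypergeometric_sub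
    (a b : ℝ) {c z : ℝ} (hc : ∀ k : ℕ, (k : ℝ) ≠ -c) (hz : z ∈ Set.Ioo 0 1) :
    HasDerivAt (fun t => t ^ c * (1 - t) ^ (a + b + 1 - c) * exp (a * b / c * t) *
        (₂F₁ (a + 1) (b + 1) (c + 1) t - ₂F₁ a b c t))
      (z ^ c * (1 - z) ^ (a + b - c) * exp (a * b / c * z) *
        ((a + b + 1 - a * b / c * (1 - z)) * ₂F₁ a b c z)) z := by
  obtain ⟨hz0, hz1⟩ := hz
  have hnorm : ‖z‖ < 1 := by rw [Real.norm_eq_abs, abs_lt]; constructor <;> linarith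
  have hF := hasDerivAt_ordinaryHypergeometric a b hc hnorm
  have hG := hasDerivAt_ordinaryHypergeometric (a + 1) (b + 1) (natCast_ne_neg_add_one hc) hnorm
  rw [show a + 1 + 1 = a + 2 by ring, show b + 1 + 1 = b + 2 by ring,
    show c + 1 + 1 = c + 2 by ring] at hG
  have hpow : HasDerivAt (fun t => t ^ c) (c * z ^ (c - 1)) z :=
    Real.hasDerivAt_rpow_const (Or.inl hz0.ne')
  have hone : HasDerivAt (fun t => (1 - t) ^ (a + b + 1 - c))
      ((a + b + 1 - c) * (1 - z) ^ (a + b + 1 - c - 1) * (-1)) z :=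
    (Real.hasDerivAt_rpow_const (Or.inl (sub_ne_zero.2 hz1.ne'))).comp z
      ((hasDerivAt_id z).const_sub 1)
  have hexp := ((hasDerivAt_id z).const_mul (a * b / c)).exp
  refine (((hpow.mul hone).mul hexp).mul (hG.sub hF)).congr_deriv ?_
  have hzc : z ^ c = z ^ (c - 1) * z := by rw [← Real.rpow_add_one hz0.ne', sub_add_cancel]
  have hq : (1 - z) ^ (a + b + 1 - c) = (1 - z) ^ (a + b - c) * (1 - z) := by
    rw [← Real.rpow_add_one (sub_ne_zero.2 hz1.ne')]; ring_nf
  simp only [Pi.mul_apply, Pi.sub_apply, id]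
  rw [hzc, hq, show a + b + 1 - c - 1 = a + b - c by ring]
  linear_combination (z ^ (c - 1) * (1 - z) ^ (a + b - c) * exp (a * b / c * z)) *
    ordinaryHypergeometric_contiguous a b hc hnorm

/-- New indefinite integral for the Gauss hypergeometric function: with
`λ₁ = 2c/(b(2b+1)+c)`, `p₁ = b(2b+1)/(b(2b+1)+c)`, `p₂ = b(2b+1)/(2c)`, for `c > 0` and
every `z ∈ (0,1)`, the function
`z ↦ λ₁ z^c (1-z)^(1/2-c) e^(-p₂z) [₂F₁(-b+1/2,b+1;c+1;z) - ₂F₁(-b-1/2,b;c;z)]`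
has derivative `z^c (1-z)^(-c-1/2) (1-p₁z) e^(-p₂z) ₂F₁(-b-1/2,b;c;z)` at `z`. -/
theorem hypergeometric_integral_exponential
    (b c lam p₁ p₂ : ℝ) (hc : 0 < c) (hbc : b * (2 * b + 1) + c ≠ 0)
    (hlam : lam = 2 * c / (b * (2 * b + 1) + c))
    (hp₁ : p₁ = b * (2 * b + 1) / (b * (2 * b + 1) + c))
    (hp₂ : p₂ = b * (2 * b + 1) / (2 * c)) :
    ∀ z ∈ Set.Ioo (0 : ℝ) 1,
      HasDerivAt
        (fun t => lam * t ^ c * (1 - t) ^ (1 / 2 - c) * Real.exp (-p₂ * t)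
          * (₂F₁ (-b + 1 / 2) (b + 1) (c + 1) t - ₂F₁ (-b - 1 / 2) b c t))
        (z ^ c * (1 - z) ^ (-c - 1 / 2) * (1 - p₁ * z) * Real.exp (-p₂ * z)
          * ₂F₁ (-b - 1 / 2) b c z) z := by
  intro z hz
  have hc' : ∀ k : ℕ, (k : ℝ) ≠ -c := fun k h => by linarith [k.cast_nonneg (α := ℝ)]
  have h := hasDerivAt_rpow_mul_one_sub_rpow_mul_exp_mul_ordinaryHypergeometric_sub
    (-b - 1 / 2) b hc' hz
  rw [show -b - 1 / 2 + 1 = -b + 1 / 2 by ring, show -b - 1 / 2 + b + 1 - c = 1 / 2 - c by ring,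
    show -b - 1 / 2 + b - c = -c - 1 / 2 by ring,
    show (-b - 1 / 2) * b / c = -p₂ by rw [hp₂]; field_simp; ring] at h
  have hfactor : lam * (-b - 1 / 2 + b + 1 - -p₂ * (1 - z)) = 1 - p₁ * z := by
    rw [hlam, hp₁, hp₂]
    field_simp
    ring
  refine ((h.const_mul lam).congr_deriv ?_).congr_of_eventuallyEq
    (Filter.Eventually.of_forall fun t => ?_)
  · rw [← hfactor]
    ring
  · ring
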